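/- arXiv:1211.4324 — 4 statements merged into one kernel-verified Lean document; each statement's English description precedes it below -/
import Mathlib

section
/- Let S = K[x_1,...,x_n] be a polynomial ring over a field K, and let c, i be positive integers. Every monomial m of degree ic in S admits a unique decomposition m = m_1 · m_2 ⋯ m_i into monomials m_1,...,m_i each of degree c such that max(m_j) ≤ min(m_{j+1}) for all j, where max(m) (resp. min(m)) denotes the largest (resp. smallest) index of a variable dividing m. -/
/-!
Read a monomial as the sorted list of its variables, repeated with multiplicity. If
`max(m_j) ≤ min(m_{j+1})` and no `m_j` is `1`, the concatenation of the sorted lists of the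
`m_j` is sorted, hence it is the sorted list of `m`; so the `m_j` are forced to be the
consecutive blocks of length `c` of that list, and these blocks do form such a decomposition.
-/

open MvPolynomial

namespace List

variable {α : Type*}

theorem splitLengths_map_length_flatten (L : List (List α)) :
    (L.map length).splitLengths L.flatten = L := by
  induction L with
  | nil => rfl
  | cons l L ih => simp [ih]

theorem pairwise_splitLengths {R : α → α → Prop} {l : List α} (hl : l.Pairwise R) {sz : List ℕ}
    (hsz : l.length ≤ sz.sum) :
    (sz.splitLengths l).Pairwise fun b₁ b₂ => ∀ x ∈ b₁, ∀ y ∈ b₂, R x y :=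
  (pairwise_flatten.1 (by rwa [flatten_splitLengths _ _ hsz])).2

theorem pairwise_flatten_of_isChain [Preorder α] {L : List (List α)} (hne : [] ∉ L)
    (hL : ∀ l ∈ L, l.Pairwise (· ≤ ·))
    (hchain : L.IsChain fun l₁ l₂ => ∀ x ∈ l₁, ∀ y ∈ l₂, x ≤ y) :
    L.flatten.Pairwise (· ≤ ·) := by
  rw [← isChain_iff_pairwise, isChain_flatten hne]
  refine ⟨fun l hl => (hL l hl).isChain, hchain.imp ?_⟩
  exact fun l₁ l₂ h x hx y hy => h x (mem_of_mem_getLast? hx) y (mem_of_mem_head? hy)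

end List

namespace Finsupp

section OfList

variable {α : Type*} [DecidableEq α]

noncomputable def ofList (l : List α) : α →₀ ℕ := Multiset.toFinsupp l

theorem mem_support_ofList {l : List α} {a : α} : a ∈ (ofList l).support ↔ a ∈ l := by
  simp [ofList]

theorem sum_ofList (l : List α) : (ofList l).sum (fun _ k => k) = l.length :=
  Multiset.toFinsupp_sum_eq _

theorem sum_map_ofList (L : List (List α)) : (L.map ofList).sum = ofList L.flatten := by
  induction L with
  | nil => rfl
  | cons l L ih =>
    simp only [List.map_cons, List.sum_cons, ih, List.flatten_cons, ofList, ← Multiset.coe_add,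
      map_add]

end OfList

variable {α : Type*} [LinearOrder α]

noncomputable def sortedList (e : α →₀ ℕ) : List α := (toMultiset e).sort (· ≤ ·)

theorem pairwise_sortedList (e : α →₀ ℕ) : e.sortedList.Pairwise (· ≤ ·) :=
  Multiset.pairwise_sort _ _

theorem coe_sortedList (e : α →₀ ℕ) : (e.sortedList : Multiset α) = toMultiset e :=
  Multiset.sort_eq _ _

theorem ofList_sortedList (e : α →₀ ℕ) : ofList e.sortedList = e := by
  rw [ofList, coe_sortedList, toMultiset_toFinsupp]

theorem mem_sortedList {e : α →₀ ℕ} {a : α} : a ∈ e.sortedList ↔ a ∈ e.support := by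
  rw [sortedList, Multiset.mem_sort, mem_toMultiset]

theorem length_sortedList (e : α →₀ ℕ) : e.sortedList.length = e.sum fun _ k => k := by
  rw [← sum_ofList, ofList_sortedList]

theorem sortedList_eq_nil {e : α →₀ ℕ} : e.sortedList = [] ↔ e = 0 := by
  refine ⟨fun h => ?_, fun h => by simp [h, sortedList]⟩
  rw [← ofList_sortedList e, h]
  rfl

theorem flatten_map_sortedList {L : List (α →₀ ℕ)} (h0 : 0 ∉ L)
    (hchain : L.IsChain fun e₁ e₂ => ∀ a ∈ e₁.support, ∀ b ∈ e₂.support, a ≤ b) :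
    (L.map sortedList).flatten = L.sum.sortedList := by
  refine List.Perm.eq_of_pairwise' ?_ L.sum.pairwise_sortedList ?_
  · refine List.pairwise_flatten_of_isChain ?_ ?_ ?_
    · simpa [sortedList_eq_nil] using h0
    · simpa using fun e _ => e.pairwise_sortedList
    · simpa [List.isChain_map, mem_sortedList] using hchain
  · rw [← Multiset.coe_eq_coe, coe_sortedList, ← Multiset.coe_join, List.map_map]
    simp [Function.comp_def, coe_sortedList, Multiset.join, map_list_sum]

end Finsupp

theorem MvPolynomial.monomial_list_sum_one {R σ : Type*} [CommSemiring R] (L : List (σ →₀ ℕ)) :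
    monomial L.sum (1 : R) = (L.map fun e => monomial e 1).prod := by
  induction L with
  | nil => simp
  | cons e L ih => rw [List.sum_cons, List.map_cons, List.prod_cons, ← ih, monomial_mul, one_mul]

section BlockDecomposition

open Finsupp

variable {α : Type*} [LinearOrder α]

noncomputable def blockDecomposition (c i : ℕ) (m : α →₀ ℕ) : List (α →₀ ℕ) :=
  ((List.replicate i c).splitLengths m.sortedList).map ofList

variable {c i : ℕ} {m : α →₀ ℕ}

theorem length_blockDecomposition : (blockDecomposition c i m).length = i := by
  simp [blockDecomposition]

theorem sum_eq_of_mem_blockDecomposition (hm : m.sum (fun _ k => k) = i * c) :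
    ∀ e ∈ blockDecomposition c i m, e.sum (fun _ k => k) = c := by
  have hlengths := List.map_splitLengths_length m.sortedList (List.replicate i c)
    (by simp [length_sortedList, hm])
  simp only [blockDecomposition, List.mem_map, forall_exists_index, and_imp]
  rintro _ b hb rfl
  rw [sum_ofList]
  exact List.eq_replicate_iff.1 hlengths |>.2 _ (List.mem_map_of_mem hb)

theorem sum_blockDecomposition (hm : m.sum (fun _ k => k) = i * c) :
    (blockDecomposition c i m).sum = m := by
  rw [blockDecomposition, sum_map_ofList,
    List.flatten_splitLengths _ _ (by simp [length_sortedList, hm]), ofList_sortedList]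

theorem isChain_blockDecomposition (hm : m.sum (fun _ k => k) = i * c) :
    (blockDecomposition c i m).IsChain fun e₁ e₂ => ∀ a ∈ e₁.support, ∀ b ∈ e₂.support, a ≤ b := by
  have := (List.pairwise_splitLengths m.pairwise_sortedList
    (sz := List.replicate i c) (by simp [length_sortedList, hm])).isChain
  simpa only [blockDecomposition, List.isChain_map, mem_support_ofList] using this

theorem eq_blockDecomposition (hc : 0 < c) {L : List (α →₀ ℕ)} (hlen : L.length = i)
    (hdeg : ∀ e ∈ L, e.sum (fun _ k => k) = c) (hsum : L.sum = m)
    (hchain : L.IsChain fun e₁ e₂ => ∀ a ∈ e₁.support, ∀ b ∈ e₂.support, a ≤ b) :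
    L = blockDecomposition c i m := by
  have h0 : 0 ∉ L := fun h => by simpa [hc.ne] using hdeg 0 h
  have hlengths : (L.map sortedList).map List.length = List.replicate i c := by
    simp only [List.map_map, List.eq_replicate_iff, List.length_map, hlen, List.mem_map,
      Function.comp_apply, length_sortedList, true_and]
    rintro _ ⟨e, he, rfl⟩
    exact hdeg e he
  calc L = (L.map sortedList).map ofList := by simp [Function.comp_def, ofList_sortedList]
    _ = blockDecomposition c i m := by
      rw [blockDecomposition, ← hlengths, ← hsum, ← flatten_map_sortedList h0 hchain,
        List.splitLengths_map_length_flatten]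

end BlockDecomposition

theorem stmt_0_general (K : Type) [Field K] (n c i : ℕ) (hc : 0 < c)
    (m : Fin n →₀ ℕ) (hm : m.sum (fun _ k => k) = i * c) :
    ∃! L : List (Fin n →₀ ℕ),
      L.length = i ∧
      (∀ e ∈ L, e.sum (fun _ k => k) = c) ∧
      (L.map (fun e => (MvPolynomial.monomial e (1 : K)))).prod = MvPolynomial.monomial m 1 ∧
      L.Chain' (fun e₁ e₂ => ∀ a ∈ e₁.support, ∀ b ∈ e₂.support, a ≤ b) := by
  have hprod (L : List (Fin n →₀ ℕ)) :
      (L.map fun e => monomial e (1 : K)).prod = monomial m 1 ↔ L.sum = m := by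
    rw [← monomial_list_sum_one, (monomial_left_injective one_ne_zero).eq_iff]
  refine ⟨blockDecomposition c i m, ⟨length_blockDecomposition,
    sum_eq_of_mem_blockDecomposition hm, (hprod _).2 (sum_blockDecomposition hm),
    isChain_blockDecomposition hm⟩, ?_⟩
  rintro L ⟨hlen, hdeg, hL, hchain⟩
  exact eq_blockDecomposition hc hlen hdeg ((hprod L).1 hL) hchain

/-- Every monomial of degree `i*c` in `K[x_1,...,x_n]` admits a unique decomposition into
`i` monomials of degree `c` such that `max(m_j) ≤ min(m_{j+1})` for all `j`. -/
theorem stmt_0 (K : Type) [Field K] (n c i : ℕ) (hc : 0 < c) (hi : 0 < i)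
    (m : Fin n →₀ ℕ) (hm : m.sum (fun _ k => k) = i * c) :
    ∃! L : List (Fin n →₀ ℕ),
      L.length = i ∧
      (∀ e ∈ L, e.sum (fun _ k => k) = c) ∧
      (L.map (fun e => (MvPolynomial.monomial e (1 : K)))).prod = MvPolynomial.monomial m 1 ∧
      L.Chain' (fun e₁ e₂ => ∀ a ∈ e₁.support, ∀ b ∈ e₂.support, a ≤ b) :=
  stmt_0_general K n c i hc m hm
end

section
/- Let S = K[x_1,...,x_n] and let I ⊂ S be an ideal generated by monomials of degree 2. Then R = S/I is strongly Koszul with respect to the basis of R_1 given by the residue classes of the variables: for every subset Y of the variable classes and every variable class x not in Y, the colon ideal (Y) : x in R is generated by a subset of the variable classes. -/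
/-!
Modulo `I`, the ideal `(Y)` lifts to the monomial ideal `(Y) + I` of `S`, and since `I ⊆ (Y) + I`
the colon by `x_i` may be computed in `S`. The colon of a monomial ideal by `x_i` is generated by
the monomials `u / gcd(u, x_i)` (exponent `u - single i 1`, truncated subtraction). For the
generators `x_j` (`j ∈ Y`, so `j ≠ i`) and the quadratic monomials `u ∈ E` these are `x_j`, `u`
itself when `x_i ∤ u`, and `x_l` when `u = x_i x_l`; the monomials of `E` are absorbed by `I`, so
`(Y) : x_i = (Y ∪ {l | x_i x_l ∈ E})`.
-/

open MvPolynomial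

namespace Finsupp

variable {σ : Type*}

lemma tsub_single_of_apply_eq_zero {s : σ →₀ ℕ} {i : σ} (hi : s i = 0) (k : ℕ) :
    s - single i k = s := by
  ext j
  rcases eq_or_ne j i with rfl | hj
  · simp [hi]
  · simp [hj.symm]

lemma exists_eq_single_add_single_of_degree_eq_two {s : σ →₀ ℕ} (hs : s.degree = 2) {i : σ}
    (hi : s i ≠ 0) : ∃ l, s = single i 1 + single l 1 := by
  classical
  obtain ⟨t, ht⟩ := Multiset.exists_cons_of_mem ((mem_toMultiset s i).mpr (mem_support_iff.mpr hi))
  have hcard : Multiset.card t + 1 = 2 := by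
    rw [← Multiset.card_cons, ← ht, card_toMultiset]
    exact hs
  obtain ⟨l, rfl⟩ := Multiset.card_eq_one.mp (show Multiset.card t = 1 by omega)
  refine ⟨l, ?_⟩
  rw [toMultiset_eq_iff.mp ht, ← Multiset.singleton_add, Multiset.toFinsupp_add,
    Multiset.toFinsupp_singleton, Multiset.toFinsupp_singleton]

end Finsupp

namespace Ideal

variable {R : Type*} [CommRing R]

lemma map_mk_colon_singleton_of_le {I J : Ideal R} (hIJ : I ≤ J) (a : R) :
    (J.map (Quotient.mk I)).colon {Quotient.mk I a} = (J.colon {a}).map (Quotient.mk I) := by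
  ext r
  obtain ⟨f, rfl⟩ := Quotient.mk_surjective r
  have hI : I ≤ J.colon {a} := fun x hx =>
    Submodule.mem_colon_singleton.mpr (J.mul_mem_right _ (hIJ hx))
  rw [Submodule.mem_colon_singleton, smul_eq_mul, ← map_mul, mem_quotient_iff_mem hIJ,
    mem_quotient_iff_mem hI, Submodule.mem_colon_singleton, smul_eq_mul]

end Ideal

namespace MvPolynomial

variable {σ R : Type*} [CommSemiring R]

lemma span_monomial_le_of_forall_exists_le {S T : Set (σ →₀ ℕ)} (h : ∀ t ∈ T, ∃ s ∈ S, s ≤ t) :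
    Ideal.span ((fun t => monomial t (1 : R)) '' T) ≤
      Ideal.span ((fun s => monomial s (1 : R)) '' S) := by
  refine Ideal.span_le.mpr ?_
  rintro _ ⟨t, ht, rfl⟩
  refine mem_ideal_span_monomial_image.mpr fun u hu => ?_
  rw [Finset.mem_singleton.mp (support_monomial_subset hu)]
  exact h t ht

lemma span_monomial_image_colon_X (S : Set (σ →₀ ℕ)) (i : σ) :
    (Ideal.span ((fun s => monomial s (1 : R)) '' S)).colon {X i} =
      Ideal.span ((fun s => monomial s (1 : R)) '' ((· - Finsupp.single i 1) '' S)) := by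
  ext f
  simp only [Submodule.mem_colon_singleton, smul_eq_mul, mem_ideal_span_monomial_image,
    support_mul_X, Finset.mem_map, addRightEmbedding_apply, Set.exists_mem_image, tsub_le_iff_right,
    forall_exists_index, and_imp, forall_apply_eq_imp_iff₂]

open Finsupp in
lemma span_monomial_image_colon_X_of_degree_eq_two {E : Set (σ →₀ ℕ)}
    (hE : ∀ e ∈ E, e.degree = 2) {Y : Set σ} {i : σ} (hi : i ∉ Y) :
    (Ideal.span ((fun s => monomial s (1 : R)) '' ((single · 1) '' Y ∪ E))).colon {X i} =
      Ideal.span ((fun s => monomial s (1 : R)) ''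
        ((single · 1) '' (Y ∪ {j | single i 1 + single j 1 ∈ E}) ∪ E)) := by
  have single_tsub {j : σ} (hj : j ≠ i) : single j 1 - single i 1 = single j 1 :=
    tsub_single_of_apply_eq_zero (by simp [hj.symm]) 1
  rw [span_monomial_image_colon_X]
  apply le_antisymm <;> apply span_monomial_le_of_forall_exists_le
  · rintro _ ⟨u, ⟨j, hj, rfl⟩ | hu, rfl⟩
    · exact ⟨single j 1, Or.inl ⟨j, Or.inl hj, rfl⟩, (single_tsub (ne_of_mem_of_not_mem hj hi)).ge⟩
    · by_cases hui : u i = 0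
      · exact ⟨u, Or.inr hu, (tsub_single_of_apply_eq_zero hui 1).ge⟩
      · obtain ⟨l, rfl⟩ := exists_eq_single_add_single_of_degree_eq_two (hE _ hu) hui
        exact ⟨single l 1, Or.inl ⟨l, Or.inr hu, rfl⟩, (add_tsub_cancel_left _ _).ge⟩
  · rintro _ (⟨j, hj | hj, rfl⟩ | hu)
    · exact ⟨_, ⟨_, Or.inl ⟨j, hj, rfl⟩, rfl⟩, (single_tsub (ne_of_mem_of_not_mem hj hi)).le⟩
    · exact ⟨_, ⟨_, Or.inr hj, rfl⟩, (add_tsub_cancel_left _ _).le⟩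
    · exact ⟨_, ⟨_, Or.inr hu, rfl⟩, tsub_le_self⟩

end MvPolynomial

/-- If `I ⊂ S = K[x_1,...,x_n]` is generated by monomials of degree 2, then `R = S/I` is
strongly Koszul with respect to the residue classes of the variables: every colon ideal
`(Y) : x` of an ideal generated by a subset `Y` of the variable classes by a variable class
`x ∉ Y` is again generated by a subset of the variable classes. -/
theorem stmt_10 (K : Type) [Field K] (n : ℕ) (E : Set (Fin n →₀ ℕ))
    (hE : ∀ e ∈ E, e.sum (fun _ k => k) = 2)
    (I : Ideal (MvPolynomial (Fin n) K))
    (hI : I = Ideal.span ((fun e => (MvPolynomial.monomial e (1 : K))) '' E))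
    (xbar : Fin n → (MvPolynomial (Fin n) K ⧸ I))
    (hx : ∀ i, xbar i = Ideal.Quotient.mk I (X i)) :
    ∀ (Y : Set (Fin n)) (i : Fin n), xbar i ∉ xbar '' Y →
      ∃ Z : Set (Fin n),
        Submodule.colon (Ideal.span (xbar '' Y)) (Ideal.span {xbar i}) =
          Ideal.span (xbar '' Z) := by
  intro Y i hiY
  refine ⟨Y ∪ {j | Finsupp.single i 1 + Finsupp.single j 1 ∈ E}, ?_⟩
  have span_X_sup (W : Set (Fin n)) : Ideal.span (X '' W) ⊔ I =
      Ideal.span ((fun s => monomial s (1 : K)) '' ((Finsupp.single · 1) '' W ∪ E)) := by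
    rw [hI, ← Ideal.span_union, Set.image_union, Set.image_image]
    rfl
  have span_xbar (W : Set (Fin n)) :
      Ideal.span (xbar '' W) = (Ideal.span (X '' W) ⊔ I).map (Ideal.Quotient.mk I) := by
    rw [Ideal.map_sup, Ideal.map_quotient_self, sup_bot_eq, Ideal.map_span, Set.image_image]
    exact congrArg _ (Set.image_congr fun j _ => hx j)
  rw [Ideal.colon_span, span_xbar, span_xbar, hx i,
    Ideal.map_mk_colon_singleton_of_le le_sup_right, span_X_sup, span_X_sup,
    span_monomial_image_colon_X_of_degree_eq_two hE fun hi => hiY ⟨i, hi, rfl⟩]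
end

section
/- Let S = K[x_1,...,x_n] and let I ⊂ S be an ideal generated by monomials of degree ≤ d. Then for every c ≥ d − 1, the c-th Veronese subalgebra R^(c) of R = S/I is strongly Koszul with respect to the basis of (R^(c))_1 consisting of the residue classes of the degree-c monomials not in I. -/
/-!
Let `x` be the class of a degree-`c` monomial `u`, and let `F` be the exponents of the monomials
in `Y`. If `a ∈ R^(c)` lifts to `p` and `a x ∈ (Y)`, then `p u` lies in the monomial ideal of
`E ∪ F`, so every monomial `m` of `p` satisfies `g ≤ m + u` for some `g ∈ E ∪ F`. We may assume
`m ∉ I`; then `g ⊓ m` has degree at most `c`: for `g ∈ F` since `deg g = c`, and for `g ∈ E`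
since `g ⊓ m < g` and `deg g ≤ d ≤ c + 1`. Extending `g ⊓ m` inside `m` to a monomial `m'` of
degree `c` gives a generator `m' ∉ I` of `R^(c)` dividing `m` with `g ≤ m' + u`, i.e. `m' x ∈ (Y)`.
So `(Y) : x` is generated by the generators of `R^(c)` it contains.
-/

namespace Finsupp

variable {σ : Type*}

lemma degree_lt_degree {f g : σ →₀ ℕ} (h : f < g) : f.degree < g.degree := by
  obtain ⟨k, rfl⟩ := le_iff_exists_add.mp h.le
  have hk : k.degree ≠ 0 := by
    rw [Ne, degree_eq_zero_iff]
    rintro rfl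
    simp at h
  rw [map_add]
  omega

lemma le_inf_add_of_le_add {g m u : σ →₀ ℕ} (h : g ≤ m + u) : g ≤ g ⊓ m + u := by
  rw [le_def] at h ⊢
  intro i
  have := h i
  simp only [inf_apply, add_apply] at this ⊢
  omega

lemma exists_le_degree_eq_le_add {g m u : σ →₀ ℕ} {c : ℕ} (hg : g ≤ m + u)
    (hgm : (g ⊓ m).degree ≤ c) (hcm : c ≤ m.degree) :
    ∃ m' ≤ m, m'.degree = c ∧ g ≤ m' + u := by
  obtain ⟨k, hk⟩ := le_iff_exists_add.mp (inf_le_right : g ⊓ m ≤ m)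
  obtain ⟨k', hk'k, hk'⟩ := exists_le_degree_eq k (c - (g ⊓ m).degree)
    (by rw [hk, map_add] at hcm; omega)
  refine ⟨g ⊓ m + k', (add_le_add le_rfl hk'k).trans hk.ge, by rw [map_add, hk']; omega, ?_⟩
  exact (le_inf_add_of_le_add hg).trans (add_le_add le_self_add le_rfl)

end Finsupp

noncomputable section

namespace MvPolynomial

variable {σ R : Type*}

section CommSemiring

variable [CommSemiring R]

variable (R) in
def veroneseSubalgebra (c : ℕ) : Subalgebra R (MvPolynomial σ R) :=
  (restrictSupport R {m | c ∣ m.degree}).toSubalgebra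
    (by simpa using (monomial_mem_restrictSupport R (s := {m : σ →₀ ℕ | c ∣ m.degree})
      (m := 0) (r := 1)).2 (.inl (by simp)))
    (fun p q hp hq => by
      refine restrictSupport_mono R ?_ (restrictSupport_add R _ _ ▸ Submodule.mul_mem_mul hp hq)
      rw [Set.add_subset_iff]
      intro a ha b hb
      simpa using dvd_add ha hb)

lemma mem_veroneseSubalgebra {c : ℕ} {p : MvPolynomial σ R} :
    p ∈ veroneseSubalgebra R c ↔ ∀ m ∈ p.support, c ∣ m.degree :=
  Iff.rfl

lemma monomial_mem_veroneseSubalgebra {c : ℕ} {m : σ →₀ ℕ} (h : c ∣ m.degree) (r : R) :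
    monomial m r ∈ veroneseSubalgebra R c :=
  (monomial_mem_restrictSupport R).2 (.inl h)

variable (R) in
theorem adjoin_monomial_degree_eq (c : ℕ) :
    Algebra.adjoin R ((monomial · (1 : R)) '' {m : σ →₀ ℕ | m.degree = c}) =
      veroneseSubalgebra R c := by
  refine le_antisymm (Algebra.adjoin_le ?_) fun p hp => ?_
  · rintro _ ⟨m, rfl, rfl⟩
    exact monomial_mem_veroneseSubalgebra dvd_rfl 1
  have hmon : ∀ (j : ℕ) (m : σ →₀ ℕ), m.degree = c * j →
      monomial m 1 ∈ Algebra.adjoin R ((monomial · (1 : R)) '' {m : σ →₀ ℕ | m.degree = c}) := by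
    intro j
    induction j with
    | zero =>
      intro m hm
      rw [mul_zero, Finsupp.degree_eq_zero_iff] at hm
      simp [hm]
    | succ j ih =>
      intro m hm
      obtain ⟨m', hm'm, hm'⟩ := Finsupp.exists_le_degree_eq m c (by rw [hm]; nlinarith)
      obtain ⟨k, rfl⟩ := le_iff_exists_add.mp hm'm
      rw [show monomial (m' + k) (1 : R) = monomial m' 1 * monomial k 1 by
        rw [monomial_mul, one_mul]]
      refine Subalgebra.mul_mem _ (Algebra.subset_adjoin ⟨m', hm', rfl⟩) (ih k ?_)
      rw [map_add, hm'] at hm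
      linarith
  rw [p.as_sum]
  refine Subalgebra.sum_mem _ fun m hm => ?_
  obtain ⟨j, hj⟩ := mem_veroneseSubalgebra.1 hp m hm
  rw [← mul_one (coeff m p), ← smul_eq_mul, ← smul_monomial]
  exact Subalgebra.smul_mem _ (hmon j m hj) _

variable (R) in
def monomialIdeal (E : Set (σ →₀ ℕ)) : Ideal (MvPolynomial σ R) :=
  Ideal.span ((fun e => monomial e 1) '' E)

lemma monomialIdeal_union (E F : Set (σ →₀ ℕ)) :
    monomialIdeal R (E ∪ F) = monomialIdeal R E ⊔ monomialIdeal R F := by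
  rw [monomialIdeal, Set.image_union, Ideal.span_union, monomialIdeal, monomialIdeal]

lemma monomial_mem_monomialIdeal_of_le {E : Set (σ →₀ ℕ)} {g m : σ →₀ ℕ} (hg : g ∈ E)
    (hgm : g ≤ m) : monomial m (1 : R) ∈ monomialIdeal R E := by
  obtain ⟨k, rfl⟩ := le_iff_exists_add.mp hgm
  rw [← one_mul (1 : R), ← monomial_mul]
  exact Ideal.mul_mem_right _ _ (Ideal.subset_span ⟨g, hg, rfl⟩)

end CommSemiring

variable [CommRing R]

variable (R) in
def veroneseQuotient (I : Ideal (MvPolynomial σ R)) (c : ℕ) :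
    Subalgebra R (MvPolynomial σ R ⧸ I) :=
  (veroneseSubalgebra R c).map (Ideal.Quotient.mkₐ R I)

lemma mem_veroneseQuotient {I : Ideal (MvPolynomial σ R)} {c : ℕ} {r : MvPolynomial σ R ⧸ I} :
    r ∈ veroneseQuotient R I c ↔ ∃ p ∈ veroneseSubalgebra R c, Ideal.Quotient.mk I p = r :=
  Subalgebra.mem_map

lemma mk_monomial_mem_veroneseQuotient {I : Ideal (MvPolynomial σ R)} {c : ℕ} {m : σ →₀ ℕ}
    (hm : c ∣ m.degree) : Ideal.Quotient.mk I (monomial m 1) ∈ veroneseQuotient R I c :=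
  mem_veroneseQuotient.2 ⟨_, monomial_mem_veroneseSubalgebra hm 1, rfl⟩

theorem adjoin_mk_monomial_degree_eq (I : Ideal (MvPolynomial σ R)) (c : ℕ) :
    Algebra.adjoin R {r | ∃ m : σ →₀ ℕ, m.degree = c ∧ r = Ideal.Quotient.mk I (monomial m 1)} =
      veroneseQuotient R I c := by
  rw [veroneseQuotient, ← adjoin_monomial_degree_eq, ← Algebra.adjoin_image, Set.image_image]
  congr 1
  ext r
  simp [eq_comm]

lemma mem_of_forall_monomial {I : Ideal (MvPolynomial σ R)}
    {A : Subalgebra R (MvPolynomial σ R ⧸ I)} {J : Ideal A} {a : A} {p : MvPolynomial σ R}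
    (hp : Ideal.Quotient.mk I p = a)
    (h : ∀ m ∈ p.support,
      ∃ b ∈ J, (b : MvPolynomial σ R ⧸ I) = Ideal.Quotient.mk I (monomial m 1)) :
    a ∈ J := by
  -- the lifts of elements of `J` form a submodule, which contains every monomial of `p`
  let T : Submodule R (MvPolynomial σ R) :=
    ((J.restrictScalars R).map A.val.toLinearMap).comap (Ideal.Quotient.mkₐ R I).toLinearMap
  have hpT : p ∈ T := by
    rw [p.as_sum]
    refine Submodule.sum_mem _ fun m hm => ?_
    rw [← mul_one (coeff m p), ← smul_eq_mul, ← smul_monomial]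
    exact T.smul_mem _ (h m hm)
  obtain ⟨b, hb, hba⟩ := hpT
  rwa [← Subtype.ext (hba.trans hp)]

section MonomialQuotient

variable {E : Set (σ →₀ ℕ)} {c : ℕ}

local notation "𝓡" => veroneseQuotient R (monomialIdeal R E) c
local notation "π" => Ideal.Quotient.mk (monomialIdeal R E)

variable (R E c) in
def veroneseGenerators : Set 𝓡 :=
  {a | ∃ e : σ →₀ ℕ, e.degree = c ∧ monomial e 1 ∉ monomialIdeal R E ∧ ↑a = π (monomial e 1)}

def monomialExponents {I : Ideal (MvPolynomial σ R)} (Y : Set (veroneseQuotient R I c)) :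
    Set (σ →₀ ℕ) :=
  {f | f.degree = c ∧ ∃ y ∈ Y, ↑y = Ideal.Quotient.mk I (monomial f 1)}

lemma exists_le_add_of_mul_mem_span {Y : Set 𝓡} (hY : Y ⊆ veroneseGenerators R E c) {a x : 𝓡}
    {u : σ →₀ ℕ} {p : MvPolynomial σ R} (hx : ↑x = π (monomial u 1)) (hp : π p = a)
    (hax : a * x ∈ Ideal.span Y) : ∀ m ∈ p.support, ∃ g ∈ E ∪ monomialExponents Y, g ≤ m + u := by
  have hYF : Ideal.map (veroneseQuotient R _ c).val (Ideal.span Y) ≤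
      (monomialIdeal R (monomialExponents Y)).map π := by
    rw [Ideal.map_span, Ideal.span_le]
    rintro _ ⟨y, hy, rfl⟩
    obtain ⟨f, hf, -, hyf⟩ := hY hy
    change (y : MvPolynomial σ R ⧸ monomialIdeal R E) ∈ _
    rw [hyf]
    exact Ideal.mem_map_of_mem _ (Ideal.subset_span ⟨f, ⟨hf, y, hy, hyf⟩, rfl⟩)
  have hpu : p * monomial u 1 ∈ monomialIdeal R (E ∪ monomialExponents Y) := by
    rw [monomialIdeal_union, ← Ideal.comap_map_quotientMk, Ideal.mem_comap, map_mul, hp, ← hx]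
    exact hYF (Ideal.mem_map_of_mem _ hax)
  intro m hm
  refine mem_ideal_span_monomial_image.1 hpu (m + u) ?_
  simpa [coeff_mul_monomial] using hm

lemma mul_mem_span_of_le_add {Y : Set 𝓡} {x z : 𝓡} {u m g : σ →₀ ℕ}
    (hx : ↑x = π (monomial u 1)) (hu : u.degree = c) (hz : ↑z = π (monomial m 1))
    (hm : c ∣ m.degree) (hg : g ∈ E ∪ monomialExponents Y) (hgm : g ≤ m + u) :
    z * x ∈ Ideal.span Y := by
  have hzx : (↑(z * x) : MvPolynomial σ R ⧸ monomialIdeal R E) = π (monomial (m + u) 1) := by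
    rw [Subalgebra.coe_mul, hz, hx, ← map_mul, monomial_mul, one_mul]
  rcases hg with hgE | ⟨hg, y, hy, hyg⟩
  · have : z * x = 0 := Subtype.ext <| by
      rw [hzx, ZeroMemClass.coe_zero, Ideal.Quotient.eq_zero_iff_mem]
      exact monomial_mem_monomialIdeal_of_le hgE hgm
    rw [this]
    exact zero_mem _
  · obtain ⟨k, hk⟩ := le_iff_exists_add.mp hgm
    have hkm : k.degree = m.degree := by
      have := congrArg Finsupp.degree hk
      rw [map_add, map_add, hu, hg] at this
      omega
    let w : 𝓡 := ⟨π (monomial k 1), mk_monomial_mem_veroneseQuotient (hkm ▸ hm)⟩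
    have : z * x = w * y := Subtype.ext <| by
      rw [hzx, Subalgebra.coe_mul, hyg, ← map_mul, monomial_mul, one_mul, hk, add_comm]
    rw [this]
    exact Ideal.mul_mem_left _ _ (Ideal.subset_span hy)

lemma exists_mem_span_colon_coe_eq (hE : ∀ e ∈ E, e.degree ≤ c + 1) {Y : Set 𝓡}
    {x : 𝓡} {u : σ →₀ ℕ} (hx : ↑x = π (monomial u 1)) (hu : u.degree = c)
    (huE : monomial u 1 ∉ monomialIdeal R E) (hxY : x ∉ Y) {m g : σ →₀ ℕ} (hm : c ∣ m.degree)
    (hg : g ∈ E ∪ monomialExponents Y) (hgm : g ≤ m + u) :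
    ∃ b ∈ Ideal.span {z | z ∈ veroneseGenerators R E c ∧ z ∈ (Ideal.span Y).colon (Ideal.span {x})},
      ↑b = π (monomial m 1) := by
  by_cases hmE : monomial m 1 ∈ monomialIdeal R E
  · exact ⟨0, zero_mem _, (Ideal.Quotient.eq_zero_iff_mem.2 hmE).symm⟩
  have hm0 : m ≠ 0 := by
    rintro rfl
    rw [zero_add] at hgm
    rcases hg with hgE | ⟨hg, y, hy, hyg⟩
    · exact huE (monomial_mem_monomialIdeal_of_le hgE hgm)
    · obtain rfl : g = u :=
        hgm.eq_of_not_lt fun h => (Finsupp.degree_lt_degree h).ne (hg.trans hu.symm)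
      exact hxY (Subtype.ext (hyg.trans hx.symm) ▸ hy)
  have hgm' : (g ⊓ m).degree ≤ c := by
    rcases hg with hgE | ⟨hg, -⟩
    · have hlt : g ⊓ m < g := inf_le_left.lt_of_ne fun h =>
        hmE (monomial_mem_monomialIdeal_of_le hgE (inf_eq_left.1 h))
      have := Finsupp.degree_lt_degree hlt
      have := hE g hgE
      omega
    · exact hg ▸ Finsupp.degree_mono inf_le_left
  have hcm : c ≤ m.degree :=
    Nat.le_of_dvd (Nat.pos_of_ne_zero ((Finsupp.degree_eq_zero_iff m).not.2 hm0)) hm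
  obtain ⟨m', hm'm, hm', hgm'u⟩ := Finsupp.exists_le_degree_eq_le_add hgm hgm' hcm
  obtain ⟨k, rfl⟩ := le_iff_exists_add.mp hm'm
  have hk : c ∣ k.degree := by
    rw [map_add, hm'] at hm
    exact (Nat.dvd_add_right dvd_rfl).1 hm
  let z : 𝓡 := ⟨π (monomial m' 1), mk_monomial_mem_veroneseQuotient (hm' ▸ dvd_rfl)⟩
  let w : 𝓡 := ⟨π (monomial k 1), mk_monomial_mem_veroneseQuotient hk⟩
  have hz : z ∈ veroneseGenerators R E c := by
    refine ⟨m', hm', fun h => hmE ?_, rfl⟩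
    rw [← one_mul (1 : R), ← monomial_mul]
    exact Ideal.mul_mem_right _ _ h
  have hzx : z ∈ (Ideal.span Y).colon (Ideal.span {x}) :=
    Ideal.mem_colon_span_singleton.2 (mul_mem_span_of_le_add hx hu rfl (hm' ▸ dvd_rfl) hg hgm'u)
  refine ⟨w * z, Ideal.mul_mem_left _ _ (Ideal.subset_span ⟨hz, hzx⟩), ?_⟩
  rw [Subalgebra.coe_mul, ← map_mul, monomial_mul, one_mul, add_comm]

end MonomialQuotient

end MvPolynomial

end

open MvPolynomial

theorem stmt_11_general (K : Type) [Field K] (n d c : ℕ) (hc : d - 1 ≤ c)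
    (E : Set (Fin n →₀ ℕ)) (hE : ∀ e ∈ E, e.sum (fun _ k => k) ≤ d)
    (I : Ideal (MvPolynomial (Fin n) K))
    (hI : I = Ideal.span ((fun e => (MvPolynomial.monomial e (1 : K))) '' E))
    (A : Subalgebra K (MvPolynomial (Fin n) K ⧸ I))
    (hA : A = Algebra.adjoin K
      {r : MvPolynomial (Fin n) K ⧸ I | ∃ e : Fin n →₀ ℕ,
        e.sum (fun _ k => k) = c ∧ r = Ideal.Quotient.mk I (MvPolynomial.monomial e 1)})
    (V : Set A)
    (hV : V = {a : A | ∃ e : Fin n →₀ ℕ, e.sum (fun _ k => k) = c ∧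
      MvPolynomial.monomial e (1 : K) ∉ I ∧
      (a : MvPolynomial (Fin n) K ⧸ I) = Ideal.Quotient.mk I (MvPolynomial.monomial e 1)}) :
    ∀ (Y : Set A), Y ⊆ V → ∀ x ∈ V, x ∉ Y →
      ∃ Z : Set A, Z ⊆ V ∧
        Submodule.colon (Ideal.span Y) (Ideal.span {x}) = Ideal.span Z := by
  have hE' : ∀ e ∈ E, e.degree ≤ c + 1 := fun e he => by
    have : e.degree ≤ d := hE e he
    omega
  obtain rfl : I = monomialIdeal K E := hI
  obtain rfl : A = veroneseQuotient K (monomialIdeal K E) c :=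
    hA.trans (adjoin_mk_monomial_degree_eq _ c)
  obtain rfl : V = veroneseGenerators K E c := hV
  intro Y hY x ⟨u, hu, huE, hx⟩ hxY
  refine ⟨{z | z ∈ veroneseGenerators K E c ∧ z ∈ (Ideal.span Y).colon (Ideal.span {x})},
    fun z hz => hz.1, le_antisymm (fun a ha => ?_) (Ideal.span_le.2 fun z hz => hz.2)⟩
  obtain ⟨p, hp, hpa⟩ := mem_veroneseQuotient.1 a.2
  refine mem_of_forall_monomial hpa fun m hm => ?_
  obtain ⟨g, hg, hgm⟩ :=
    exists_le_add_of_mul_mem_span hY hx hpa (Ideal.mem_colon_span_singleton.1 ha) m hm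
  exact exists_mem_span_colon_coe_eq hE' hx hu huE hxY (mem_veroneseSubalgebra.1 hp m hm) hg hgm

/-- If `I ⊂ S = K[x_1,...,x_n]` is generated by monomials of degree `≤ d`, then for every
`c ≥ d - 1` the `c`-th Veronese subalgebra of `R = S/I` (the subalgebra generated by the
classes of the degree-`c` monomials) is strongly Koszul with respect to the basis consisting
of the residue classes of the degree-`c` monomials not in `I`. -/
theorem stmt_11 (K : Type) [Field K] (n d c : ℕ) (hc : d - 1 ≤ c) (hc0 : 0 < c)
    (E : Set (Fin n →₀ ℕ)) (hE : ∀ e ∈ E, e.sum (fun _ k => k) ≤ d)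
    (I : Ideal (MvPolynomial (Fin n) K))
    (hI : I = Ideal.span ((fun e => (MvPolynomial.monomial e (1 : K))) '' E))
    (A : Subalgebra K (MvPolynomial (Fin n) K ⧸ I))
    (hA : A = Algebra.adjoin K
      {r : MvPolynomial (Fin n) K ⧸ I | ∃ e : Fin n →₀ ℕ,
        e.sum (fun _ k => k) = c ∧ r = Ideal.Quotient.mk I (MvPolynomial.monomial e 1)})
    (V : Set A)
    (hV : V = {a : A | ∃ e : Fin n →₀ ℕ, e.sum (fun _ k => k) = c ∧
      MvPolynomial.monomial e (1 : K) ∉ I ∧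
      (a : MvPolynomial (Fin n) K ⧸ I) = Ideal.Quotient.mk I (MvPolynomial.monomial e 1)}) :
    ∀ (Y : Set A), Y ⊆ V → ∀ x ∈ V, x ∉ Y →
      ∃ Z : Set A, Z ⊆ V ∧
        Submodule.colon (Ideal.span Y) (Ideal.span {x}) = Ideal.span Z :=
  stmt_11_general K n d c hc E hE I hI A hA V hV
end

section
/- Let R be a universally Koszul standard graded K-algebra. Then for any linear forms ℓ_1,...,ℓ_d ∈ R_1 with ℓ_1⋯ℓ_d ≠ 0, the annihilator ideal 0 : (ℓ_1⋯ℓ_d) is generated by elements of degree 1. -/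
/-- A standard graded `K`-algebra structure on `R`. -/
structure StdGraded (K : Type) (R : Type) [Field K] [CommRing R] [Algebra K R] where
  grade : ℕ → Submodule K R
  grade_zero : grade 0 = 1
  mul_mem : ∀ (i j : ℕ) (r s : R), r ∈ grade i → s ∈ grade j → r * s ∈ grade (i + j)
  internal : DirectSum.IsInternal grade
  standard : ∀ i : ℕ, grade 1 * grade i = grade (i + 1)

namespace StdGraded

variable {K R : Type} [Field K] [CommRing R] [Algebra K R]

/-- The irrelevant maximal homogeneous ideal `m_R`. -/
def irrelevant (G : StdGraded K R) : Ideal R :=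
  Ideal.span {r : R | ∃ i : ℕ, r ∈ G.grade (i + 1)}

/-- `r` is homogeneous of degree `z` (or zero). -/
def homog (G : StdGraded K R) (z : ℤ) (r : R) : Prop :=
  r = 0 ∨ ∃ n : ℕ, (n : ℤ) = z ∧ r ∈ G.grade n

/-- An ideal is generated by elements of degree 1. -/
def Gen1 (G : StdGraded K R) (I : Ideal R) : Prop :=
  ∃ s : Set R, s ⊆ (G.grade 1 : Set R) ∧ I = Ideal.span s

end StdGraded

/-- A graded module structure over a standard graded algebra. -/
structure GradedMod {K R : Type} [Field K] [CommRing R] [Algebra K R] (G : StdGraded K R)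
    (M : Type) [AddCommGroup M] [Module R M] [Module K M] [IsScalarTower K R M] where
  grade : ℤ → Submodule K M
  smul_mem : ∀ (i : ℕ) (j : ℤ) (r : R) (m : M),
    r ∈ G.grade i → m ∈ grade j → r • m ∈ grade ((i : ℤ) + j)
  internal : DirectSum.IsInternal grade

/-- A minimal graded free resolution of the graded module `(M, gM)` over `(R, G)`.
The `i`-th free module is `ι i →₀ R` with basis elements of (twisted) degrees `deg i`. -/
structure MinFreeRes {K R : Type} [Field K] [CommRing R] [Algebra K R] (G : StdGraded K R)
    (M : Type) [AddCommGroup M] [Module R M] [Module K M] [IsScalarTower K R M]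
    (gM : GradedMod G M) where
  ι : ℕ → Type
  finite : ∀ i, Finite (ι i)
  deg : ∀ i, ι i → ℤ
  d : ∀ i : ℕ, ((ι (i + 1)) →₀ R) →ₗ[R] ((ι i) →₀ R)
  ε : ((ι 0) →₀ R) →ₗ[R] M
  ε_surj : Function.Surjective ε
  exact_zero : LinearMap.ker ε = LinearMap.range (d 0)
  exact : ∀ i, LinearMap.ker (d i) = LinearMap.range (d (i + 1))
  homog_d : ∀ (i : ℕ) (b : ι (i + 1)) (c : ι i),
      G.homog (deg (i + 1) b - deg i c) ((d i (Finsupp.single b 1)) c)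
  homog_ε : ∀ b : ι 0, ε (Finsupp.single b 1) ∈ gM.grade (deg 0 b)
  minimal : ∀ (i : ℕ) (b : ι (i + 1)) (c : ι i), ((d i (Finsupp.single b 1)) c) ∈ G.irrelevant

namespace MinFreeRes

variable {K R : Type} [Field K] [CommRing R] [Algebra K R] {G : StdGraded K R}
  {M : Type} [AddCommGroup M] [Module R M] [Module K M] [IsScalarTower K R M]
  {gM : GradedMod G M}

/-- `reg_R(M) ≤ r`: every `i`-th syzygy is generated in degrees `≤ r + i`. -/
def RegBound (F : MinFreeRes G M gM) (r : ℤ) : Prop :=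
  ∀ (i : ℕ) (b : F.ι i), F.deg i b ≤ r + i

/-- `t_i^R(M) ≤ t`. -/
def TBound (F : MinFreeRes G M gM) (i : ℕ) (t : ℤ) : Prop :=
  ∀ b : F.ι i, F.deg i b ≤ t

end MinFreeRes

/-- The grading on a quotient module `R ⧸ I` induced by the grading of `R`. -/
def QuotGrading {K R : Type} [Field K] [CommRing R] [Algebra K R] (G : StdGraded K R)
    (I : Ideal R) (gQ : GradedMod G (R ⧸ I)) : Prop :=
  (∀ j : ℕ, gQ.grade (j : ℤ) = (G.grade j).map (Ideal.Quotient.mkₐ K I).toLinearMap) ∧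
  ∀ j : ℤ, j < 0 → gQ.grade j = ⊥

/-- `R` is a Koszul algebra: the residue field `K = R ⧸ m_R` has a linear minimal
graded free resolution. -/
def StdGraded.IsKoszul {K R : Type} [Field K] [CommRing R] [Algebra K R]
    (G : StdGraded K R) : Prop :=
  ∃ (gK : GradedMod G (R ⧸ G.irrelevant)) (F : MinFreeRes G (R ⧸ G.irrelevant) gK),
    QuotGrading G G.irrelevant gK ∧ ∀ (i : ℕ) (b : F.ι i), F.deg i b = i

/-- `R` is universally Koszul: every colon ideal `I : x` of an ideal generated in degree 1
by an element `x ∈ R_1 \ I` is again generated in degree 1. -/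
def StdGraded.UnivKoszul {K R : Type} [Field K] [CommRing R] [Algebra K R]
    (G : StdGraded K R) : Prop :=
  ∀ I : Ideal R, G.Gen1 I → ∀ x ∈ G.grade 1, x ∉ I →
    G.Gen1 (Submodule.colon I (Ideal.span {x}))

theorem Ideal.colon_span_singleton_mul {R : Type*} [CommRing R] (I : Ideal R) (a b : R) :
    I.colon (Ideal.span {a * b}) = (I.colon (Ideal.span {b})).colon (Ideal.span {a}) := by
  ext r
  simp only [Ideal.mem_colon_span_singleton, mul_assoc]

namespace StdGraded

variable {K R : Type} [Field K] [CommRing R] [Algebra K R] {G : StdGraded K R}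

theorem gen1_bot (G : StdGraded K R) : G.Gen1 ⊥ :=
  ⟨∅, Set.empty_subset _, Ideal.span_empty.symm⟩

theorem UnivKoszul.gen1_colon_prod (h : G.UnivKoszul) {I : Ideal R} (hI : G.Gen1 I) {d : ℕ}
    (ℓ : Fin d → R) (hℓ : ∀ i, ℓ i ∈ G.grade 1) (hprod : ∏ i, ℓ i ∉ I) :
    G.Gen1 (I.colon (Ideal.span {∏ i, ℓ i})) := by
  induction d with
  | zero => simpa using hI
  | succ n ih =>
    rw [Fin.prod_univ_succ] at hprod ⊢
    rw [Ideal.colon_span_singleton_mul]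
    refine h _ (ih _ (fun i => hℓ _) fun hmem => hprod (I.mul_mem_left _ hmem)) _ (hℓ 0) ?_
    rwa [Ideal.mem_colon_span_singleton]

end StdGraded

/-- In a universally Koszul algebra, the annihilator of a nonzero product of linear forms is
generated by elements of degree 1. -/
theorem stmt_14 {K R : Type} [Field K] [CommRing R] [Algebra K R] (G : StdGraded K R)
    (h : G.UnivKoszul) (d : ℕ) (ℓ : Fin d → R) (hℓ : ∀ i, ℓ i ∈ G.grade 1)
    (hne : (∏ i, ℓ i) ≠ 0) :
    G.Gen1 (Submodule.colon (⊥ : Ideal R) (Ideal.span {∏ i, ℓ i})) :=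
  h.gen1_colon_prod G.gen1_bot ℓ hℓ hne
end
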